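/- arXiv:1706.01742 — 2 statements merged into one kernel-verified Lean document; each statement's English description precedes it below -/
import Mathlib

section
/- Low-expression agreement: if two annotated memories M₁, M₂ agree on all low-tagged locations (same values) and an arithmetic expression e evaluates in M₁ to a low-tagged integer v, and every variable of e is low-tagged in M₁, then e evaluates in M₂ to the same value v (with low tag), provided the tags of each variable agree between M₁ and M₂. -/
/-- Base values: integers or error. -/
inductive TVal : Type
  | int (n : ℤ)
  | err

/-- Arithmetic expressions: integer literals, variables, and `+`. -/
inductive AExp : Type
  | lit (n : ℤ)
  | var (x : ℕ)
  | add (a b : AExp)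

/-- Variables occurring in an expression. -/
def varsOf : AExp → Finset ℕ
  | .lit _ => ∅
  | .var x => {x}
  | .add a b => varsOf a ∪ varsOf b

/-- Annotated memories: tagged values (`false` = low, `true` = high). -/
abbrev AMem := ℕ → Option (TVal × Bool)

/-- Evaluation: literals are low; variables look up the tagged value; a sum is
high-tagged iff some operand is, with value the integer sum when both operands
are integers, error otherwise. -/
def evalA (M : AMem) : AExp → Option (TVal × Bool)
  | .lit n => some (.int n, false)
  | .var x => M x
  | .add a b =>
      match evalA M a, evalA M b with
      | some (.int m, t₁), some (.int n, t₂) => some (.int (m + n), t₁ || t₂)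
      | some (_, t₁), some (_, t₂) => some (.err, t₁ || t₂)
      | _, _ => none

theorem evalA_add_of_int {M : AMem} {a b : AExp} {m n : ℤ} {ta tb : Bool}
    (ha : evalA M a = some (.int m, ta)) (hb : evalA M b = some (.int n, tb)) :
    evalA M (.add a b) = some (.int (m + n), ta || tb) := by
  simp only [evalA, ha, hb]

theorem evalA_add_eq_low_int {M : AMem} {a b : AExp} {v : ℤ}
    (h : evalA M (.add a b) = some (.int v, false)) :
    ∃ m n, evalA M a = some (.int m, false) ∧ evalA M b = some (.int n, false) ∧ v = m + n := by
  simp only [evalA] at h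
  rcases ha : evalA M a with _ | ⟨m | _, ta⟩ <;> rcases hb : evalA M b with _ | ⟨n | _, tb⟩ <;>
    simp [ha, hb] at h
  obtain ⟨rfl, rfl, rfl⟩ := h
  exact ⟨m, n, rfl, rfl, rfl⟩

theorem low_agreement_general (M₁ M₂ : AMem)
    (hlow : ∀ x v, M₁ x = some (v, false) → M₂ x = some (v, false))
    (e : AExp) (v : ℤ)
    (heval : evalA M₁ e = some (.int v, false)) :
    evalA M₂ e = some (.int v, false) := by
  induction e generalizing v with
  | lit n => exact heval
  | var x => exact hlow x _ heval
  | add a b iha ihb =>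
    obtain ⟨m, n, ha, hb, rfl⟩ := evalA_add_eq_low_int heval
    exact evalA_add_of_int (iha m ha) (ihb n hb)

/-- Low-expression agreement: if `M₁` and `M₂` assign the same tags to all
variables and agree on the values of low-tagged variables, and `e` evaluates
in `M₁` to a low-tagged integer `v` with all its variables low-tagged in `M₁`,
then `e` evaluates in `M₂` to the same low-tagged value `v`. -/
theorem low_agreement (M₁ M₂ : AMem)
    (htags : ∀ x, (M₁ x).map Prod.snd = (M₂ x).map Prod.snd)
    (hlow : ∀ x v, M₁ x = some (v, false) → M₂ x = some (v, false))
    (e : AExp) (v : ℤ)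
    (hvars : ∀ x ∈ varsOf e, ∃ w, M₁ x = some (w, false))
    (heval : evalA M₁ e = some (.int v, false)) :
    evalA M₂ e = some (.int v, false) :=
  low_agreement_general M₁ M₂ hlow e v heval
end

section
/- If an attacker-knowledge memory K cannot derive any secret key sec(k) with pub(k) ∈ LR (under the derivation power that includes an oracle for all secret keys outside LR), then K cannot derive the plaintext of any ciphertext enc(v, n, LR') with LR ⊆ LR' unless v itself is derivable from K, where derivation is closed under the attacker expression constructors; in particular, extending K with a fresh ciphertext enc(v, n, LR') (fresh nonce n, LR ⊆ LR') does not allow derivation of any sec(k) with pub(k) ∈ LR that was not derivable before. -/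
/-- Values: public/secret keys, integers, pairs, and ciphertexts with nonces. -/
inductive Val : Type
  | int  (n : ℤ)
  | pub  (k : ℕ)
  | sec  (k : ℕ)
  | pair (a b : Val)
  | enc  (w : Val) (n : ℕ) (keys : Finset ℕ)

/-- Nonces occurring in a value. -/
def noncesOf : Val → Finset ℕ
  | .pair a b => noncesOf a ∪ noncesOf b
  | .enc w n _ => insert n (noncesOf w)
  | _ => ∅

/-- Secret keys occurring in a value. -/
def secKeysOf : Val → Finset ℕ
  | .pair a b => secKeysOf a ∪ secKeysOf b
  | .enc w _ _ => secKeysOf w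
  | .sec k => {k}
  | _ => ∅

/-- Attacker deduction from knowledge `K`, with an oracle providing every
secret key outside the reference right `LR`. -/
inductive Deduce (LR : Finset ℕ) (K : Set Val) : Val → Prop
  | mem {v} : v ∈ K → Deduce LR K v
  | pair {a b} : Deduce LR K a → Deduce LR K b → Deduce LR K (.pair a b)
  | fst {a b} : Deduce LR K (.pair a b) → Deduce LR K a
  | snd {a b} : Deduce LR K (.pair a b) → Deduce LR K b
  | enc {v} (n : ℕ) {keys : Finset ℕ} :
      Deduce LR K v → (∀ k ∈ keys, Deduce LR K (.pub k)) →
      Deduce LR K (.enc v n keys)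
  | dec {v n L k} :
      Deduce LR K (.enc v n L) → Deduce LR K (.sec k) → k ∈ L →
      Deduce LR K v
  | oracle {k} : k ∉ LR → Deduce LR K (.sec k)

/-! Every value deducible from `K ∪ {c}`, where `c` contains no secret key of `LR`, can be
assembled by pairing and encryption from values deducible from `K` and values containing no
secret key of `LR`: decrypting `c` or anything built from it only returns clean material. A
secret key of `LR` is not clean, so if it is assembled it was already deducible from `K`. -/

inductive Assembled (LR : Finset ℕ) (K : Set Val) : Val → Prop
  | deduce {w} : Deduce LR K w → Assembled LR K w
  | clean {w} : (∀ j ∈ LR, j ∉ secKeysOf w) → Assembled LR K w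
  | pair {a b} : Assembled LR K a → Assembled LR K b → Assembled LR K (.pair a b)
  | enc {w} (n : ℕ) (keys : Finset ℕ) : Assembled LR K w → Assembled LR K (.enc w n keys)

namespace Assembled

variable {LR : Finset ℕ} {K : Set Val}

theorem deduce_sec {k : ℕ} (h : Assembled LR K (.sec k)) : Deduce LR K (.sec k) := by
  by_cases hk : k ∈ LR
  · cases h with
    | deduce h => exact h
    | clean hc => exact absurd (Finset.mem_singleton_self k) (hc k hk)
  · exact .oracle hk

theorem of_pair {a b : Val} (h : Assembled LR K (.pair a b)) :
    Assembled LR K a ∧ Assembled LR K b := by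
  cases h with
  | deduce h => exact ⟨.deduce h.fst, .deduce h.snd⟩
  | clean hc =>
    simp only [secKeysOf, Finset.mem_union, not_or] at hc
    exact ⟨.clean fun j hj => (hc j hj).1, .clean fun j hj => (hc j hj).2⟩
  | pair ha hb => exact ⟨ha, hb⟩

theorem of_enc {w : Val} {n k : ℕ} {L : Finset ℕ} (h : Assembled LR K (.enc w n L))
    (hk : Deduce LR K (.sec k)) (hkL : k ∈ L) : Assembled LR K w := by
  cases h with
  | deduce h => exact .deduce (h.dec hk hkL)
  | clean hc => exact .clean hc
  | enc _ _ hw => exact hw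

end Assembled

theorem assembled_of_deduce_insert {LR : Finset ℕ} {K : Set Val} {c u : Val}
    (hc : ∀ j ∈ LR, j ∉ secKeysOf c) (h : Deduce LR (insert c K) u) : Assembled LR K u := by
  induction h with
  | mem hu =>
    rcases hu with rfl | hu
    · exact .clean hc
    · exact .deduce (.mem hu)
  | pair _ _ iha ihb => exact .pair iha ihb
  | fst _ ih => exact ih.of_pair.1
  | snd _ ih => exact ih.of_pair.2
  | enc m _ _ ih _ => exact .enc m _ ih
  | dec _ _ hkL ihe ihs => exact ihe.of_enc ihs.deduce_sec hkL
  | oracle hk => exact .deduce (.oracle hk)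

theorem fresh_cipher_preserves_secrecy_general (LR LR' : Finset ℕ) (K : Set Val)
    (v : Val) (n : ℕ)
    (hK : ∀ k ∈ LR, ¬ Deduce LR K (.sec k))
    (hv : ∀ k ∈ LR, k ∉ secKeysOf v) :
    ∀ k ∈ LR, ¬ Deduce LR (insert (.enc v n LR') K) (.sec k) := fun k hk h =>
  hK k hk (assembled_of_deduce_insert (c := .enc v n LR') hv h).deduce_sec

/-- If `K` cannot derive any secret key `sec k` with `pub k ∈ LR`, then
extending `K` with a fresh ciphertext `enc v n LR'` (fresh nonce `n`,
`LR ⊆ LR'`, and `v` containing no secret key of `LR`) still does not allow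
derivation of any `sec k` with `pub k ∈ LR`. -/
theorem fresh_cipher_preserves_secrecy (LR LR' : Finset ℕ) (K : Set Val)
    (v : Val) (n : ℕ)
    (hsub : LR ⊆ LR')
    (hK : ∀ k ∈ LR, ¬ Deduce LR K (.sec k))
    (hv : ∀ k ∈ LR, k ∉ secKeysOf v)
    (hfreshK : ∀ w ∈ K, n ∉ noncesOf w)
    (hfreshv : n ∉ noncesOf v) :
    ∀ k ∈ LR, ¬ Deduce LR (insert (.enc v n LR') K) (.sec k) :=
  fresh_cipher_preserves_secrecy_general LR LR' K v n hK hv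
end
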